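/- Under the Bernoulli product model with $\sum_j p_j \leq W$, the mean squared error of the Good-Turing estimator satisfies $\mathbb{E}[(\hat{M}_n - M_n)^2] \leq \frac{W^2}{n^2} + \frac{2n+1}{n(n+1)} W$ for every $n\geq 1$. -/

import Mathlib

open MeasureTheory ProbabilityTheory Filter Finset Topology

/-!
Write `M̂ₙ - Mₙ = ∑ⱼ Yⱼ` with `Yⱼ = 1{Xⱼ = 1}/n - pⱼ 1{Xⱼ = 0}`; the series converges almost surely
because, by Borel–Cantelli, only finitely many species are seen exactly once. The `Yⱼ` are
independent, with `E Yⱼ = pⱼ² (1 - pⱼ)ⁿ⁻¹ ∈ [0, pⱼ/n]` and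
`E Yⱼ² = pⱼ (1 - pⱼ)ⁿ⁻¹/n + pⱼ² (1 - pⱼ)ⁿ ≤ pⱼ/n + pⱼ/(n+1)`, both bounds coming from
`c (1 - c)ᵐ ≤ 1/(m+1)`. So every partial sum `S` satisfies
`E S² = (E S)² + Var S ≤ (W/n)² + (2n+1)/(n(n+1)) W`, and Fatou's lemma passes this to the limit.
-/

lemma mul_one_sub_pow_le_inv {c : ℝ} (hc : c ∈ Set.Icc (0 : ℝ) 1) (m : ℕ) :
    c * (1 - c) ^ m ≤ ((m : ℝ) + 1)⁻¹ := by
  obtain ⟨hc0, hc1⟩ := hc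
  have h1c : 0 ≤ 1 - c := sub_nonneg.2 hc1
  rw [← one_div, le_div_iff₀ (by positivity)]
  calc c * (1 - c) ^ m * (m + 1)
      = c ^ 1 * (1 - c) ^ (m + 1 - 1) * ((m + 1).choose 1 : ℕ) := by push_cast; simp
    _ ≤ ∑ k ∈ range (m + 1 + 1), c ^ k * (1 - c) ^ (m + 1 - k) * ((m + 1).choose k : ℕ) :=
        single_le_sum (f := fun k => c ^ k * (1 - c) ^ (m + 1 - k) * ((m + 1).choose k : ℝ))
          (fun k _ => by positivity) (mem_range.2 (by omega : 1 < m + 1 + 1))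
    _ = 1 := by rw [← add_pow, add_sub_cancel, one_pow]

section Fatou

variable {Ω : Type*} [MeasurableSpace Ω] {μ : Measure Ω}

theorem integral_le_of_tendsto_of_integral_le {F : ℕ → Ω → ℝ} {f : Ω → ℝ} {C : ℝ}
    (hF_int : ∀ N, Integrable (F N) μ) (hF_nonneg : ∀ N, 0 ≤ᵐ[μ] F N)
    (hlim : ∀ᵐ ω ∂μ, Tendsto (F · ω) atTop (𝓝 (f ω))) (hC : ∀ N, ∫ ω, F N ω ∂μ ≤ C) :
    ∫ ω, f ω ∂μ ≤ C := by
  have hC0 : 0 ≤ C := (integral_nonneg_of_ae (hF_nonneg 0)).trans (hC 0)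
  have hf_nonneg : 0 ≤ᵐ[μ] f := by
    filter_upwards [hlim, ae_all_iff.2 hF_nonneg] with ω hω hω0
    exact ge_of_tendsto' hω hω0
  have hf_meas : AEStronglyMeasurable f μ :=
    aestronglyMeasurable_of_tendsto_ae atTop (fun N => (hF_int N).1) hlim
  rw [integral_eq_lintegral_of_nonneg_ae hf_nonneg hf_meas]
  refine ENNReal.toReal_le_of_le_ofReal hC0 ?_
  calc ∫⁻ ω, ENNReal.ofReal (f ω) ∂μ
      = ∫⁻ ω, liminf (fun N => ENNReal.ofReal (F N ω)) atTop ∂μ := by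
        refine lintegral_congr_ae ?_
        filter_upwards [hlim] with ω hω
        exact ((ENNReal.continuous_ofReal.tendsto _).comp hω).liminf_eq.symm
    _ ≤ liminf (fun N => ∫⁻ ω, ENNReal.ofReal (F N ω) ∂μ) atTop :=
        lintegral_liminf_le' fun N => (hF_int N).1.aemeasurable.ennreal_ofReal
    _ ≤ ENNReal.ofReal C := by
        refine liminf_le_of_frequently_le' (Frequently.of_forall fun N => ?_)
        rw [← ofReal_integral_eq_lintegral_ofReal (hF_int N) (hF_nonneg N)]
        exact ENNReal.ofReal_le_ofReal (hC N)

end Fatou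

section SecondMoment

variable {Ω : Type*} [MeasurableSpace Ω] {μ : Measure Ω} [IsProbabilityMeasure μ]

theorem integral_sq_sum_le {ι : Type*} {Y : ι → Ω → ℝ} {s : Finset ι}
    (hY : ∀ i ∈ s, MemLp (Y i) 2 μ) (hindep : Set.Pairwise ↑s fun i j => IndepFun (Y i) (Y j) μ) :
    ∫ ω, (∑ i ∈ s, Y i ω) ^ 2 ∂μ
      ≤ (∑ i ∈ s, ∫ ω, Y i ω ∂μ) ^ 2 + ∑ i ∈ s, ∫ ω, Y i ω ^ 2 ∂μ := by
  have hvar := variance_eq_sub (memLp_finsetSum' s hY)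
  simp only [Finset.sum_apply, Pi.pow_apply] at hvar
  rw [IndepFun.variance_sum hY hindep,
    integral_finsetSum s fun i hi => (hY i hi).integrable one_le_two] at hvar
  have hle : ∑ i ∈ s, variance (Y i) μ ≤ ∑ i ∈ s, ∫ ω, Y i ω ^ 2 ∂μ :=
    sum_le_sum fun i hi => variance_le_expectation_sq (hY i hi).1
  linarith

theorem integral_sq_le_of_hasSum {Y : ℕ → Ω → ℝ} {g : Ω → ℝ} {A B : ℝ}
    (hY : ∀ j, MemLp (Y j) 2 μ) (hindep : Pairwise fun i j => IndepFun (Y i) (Y j) μ)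
    (hg : ∀ᵐ ω ∂μ, HasSum (fun j => Y j ω) (g ω))
    (hA : ∀ N, |∑ j ∈ range N, ∫ ω, Y j ω ∂μ| ≤ A)
    (hB : ∀ N, ∑ j ∈ range N, ∫ ω, Y j ω ^ 2 ∂μ ≤ B) :
    ∫ ω, g ω ^ 2 ∂μ ≤ A ^ 2 + B := by
  refine integral_le_of_tendsto_of_integral_le (F := fun N ω => (∑ j ∈ range N, Y j ω) ^ 2)
    (fun N => ?_) (fun N => ae_of_all _ fun ω => sq_nonneg _) ?_ fun N => ?_
  · simpa using (memLp_finsetSum' (range N) fun j _ => hY j).integrable_sq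
  · filter_upwards [hg] with ω hω using hω.tendsto_sum_nat.pow 2
  · refine (integral_sq_sum_le (fun j _ => hY j) fun i _ j _ hij => hindep hij).trans ?_
    exact add_le_add (sq_le_sq' (abs_le.1 (hA N)).1 (abs_le.1 (hA N)).2) (hB N)

end SecondMoment

lemma ite_eq_indicator_preimage {Ω α M : Type*} [DecidableEq α] [Zero M] (X : Ω → α) (x : α)
    (f : Ω → M) : (fun ω => if X ω = x then f ω else 0) = (X ⁻¹' {x}).indicator f := by
  ext ω
  by_cases h : X ω = x <;> simp [h]

section Indicator

variable {Ω α : Type*} [MeasurableSpace Ω] [MeasurableSpace α] [MeasurableSingletonClass α]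
  [DecidableEq α] {μ : Measure Ω} {X : Ω → α}

lemma integrable_ite_eq [IsFiniteMeasure μ] (hX : Measurable X) (x : α) (a : ℝ) :
    Integrable (fun ω => if X ω = x then a else 0) μ := by
  rw [ite_eq_indicator_preimage X x fun _ => a]
  exact (integrable_const a).indicator (hX (measurableSet_singleton x))

lemma integral_ite_eq (hX : Measurable X) (x : α) (a : ℝ) :
    ∫ ω, (if X ω = x then a else 0) ∂μ = μ.real {ω | X ω = x} * a := by
  rw [ite_eq_indicator_preimage X x fun _ => a,
    integral_indicator_const a (hX (measurableSet_singleton x)), smul_eq_mul]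
  rfl

end Indicator

namespace GoodTuring

/-- The contribution of a species of probability `c` observed `k` times to `M̂ₙ - Mₙ`. -/
noncomputable def errorTerm (n : ℕ) (c : ℝ) (k : ℕ) : ℝ :=
  (if k = 1 then (n : ℝ)⁻¹ else 0) - (if k = 0 then c else 0)

variable {n : ℕ} {c : ℝ}

lemma abs_errorTerm_le (k : ℕ) : |errorTerm n c k| ≤ (n : ℝ)⁻¹ + |c| := by
  unfold errorTerm
  rcases k with _ | _ | k <;> simp [abs_nonneg]
  positivity

lemma errorTerm_sq (k : ℕ) :
    errorTerm n c k ^ 2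
      = (if k = 1 then ((n : ℝ) ^ 2)⁻¹ else 0) + (if k = 0 then c ^ 2 else 0) := by
  unfold errorTerm
  rcases k with _ | _ | k <;> simp

theorem hasSum_errorTerm {p : ℕ → ℝ} {x : ℕ → ℕ} (hp : Summable p) (hx : {j | x j = 1}.Finite) :
    HasSum (fun j => errorTerm n (p j) (x j))
      ((∑' j, if x j = 1 then (1 : ℝ) else 0) / n - ∑' j, if x j = 0 then p j else 0) := by
  have h1 : Summable fun j => if x j = 1 then (1 : ℝ) else 0 :=
    summable_of_hasFiniteSupport (hx.subset fun j hj => by simpa using hj)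
  have h0 : Summable fun j => if x j = 0 then p j else 0 := by
    rw [ite_eq_indicator_preimage x 0 p]
    exact hp.indicator _
  refine (h1.hasSum.div_const (n : ℝ)).sub h0.hasSum |>.congr_fun fun j => ?_
  unfold errorTerm
  split_ifs <;> simp

variable {Ω : Type*} [MeasurableSpace Ω] {μ : Measure Ω} {X : Ω → ℕ}

def IsBinomial (μ : Measure Ω) (X : Ω → ℕ) (n : ℕ) (c : ℝ) : Prop :=
  ∀ k, μ {ω | X ω = k} = ENNReal.ofReal ((n.choose k : ℝ) * c ^ k * (1 - c) ^ (n - k))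

lemma measureReal_eq_of_binomial (hc : c ∈ Set.Icc (0 : ℝ) 1)
    (hbin : IsBinomial μ X n c)
    (k : ℕ) : μ.real {ω | X ω = k} = n.choose k * c ^ k * (1 - c) ^ (n - k) := by
  have := sub_nonneg.2 hc.2
  rw [measureReal_def, hbin, ENNReal.toReal_ofReal (by have := hc.1; positivity)]

theorem ae_finite_setOf_eq_one {X : ℕ → Ω → ℕ} {p : ℕ → ℝ} (hp : ∀ j, p j ∈ Set.Icc (0 : ℝ) 1)
    (hsum : Summable p) (hbin : ∀ j, IsBinomial μ (X j) n (p j)) :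
    ∀ᵐ ω ∂μ, {j | X j ω = 1}.Finite := by
  refine ae_finite_setOfPred_mem (s := fun j => {ω | X j ω = 1})
    (ne_top_of_le_ne_top (ENNReal.ofReal_ne_top (r := ∑' j, n * p j)) ?_)
  rw [ENNReal.ofReal_tsum_of_nonneg (fun j => mul_nonneg n.cast_nonneg (hp j).1) (hsum.mul_left _)]
  refine ENNReal.tsum_le_tsum fun j => ?_
  rw [hbin j 1, Nat.choose_one_right, pow_one]
  refine ENNReal.ofReal_le_ofReal (mul_le_of_le_one_right (by have := (hp j).1; positivity) ?_)
  exact pow_le_one₀ (sub_nonneg.2 (hp j).2) (by linarith [(hp j).1])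

variable [IsFiniteMeasure μ]

lemma memLp_errorTerm (hX : Measurable X) : MemLp (fun ω => errorTerm n c (X ω)) 2 μ :=
  .of_bound ((measurable_of_countable (errorTerm n c)).comp hX).aestronglyMeasurable _
    (ae_of_all _ fun ω => abs_errorTerm_le (X ω))

lemma integral_errorTerm (hX : Measurable X) :
    ∫ ω, errorTerm n c (X ω) ∂μ = μ.real {ω | X ω = 1} * (n : ℝ)⁻¹ - μ.real {ω | X ω = 0} * c := by
  simp only [errorTerm]
  rw [integral_sub (integrable_ite_eq hX _ _) (integrable_ite_eq hX _ _), integral_ite_eq hX,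
    integral_ite_eq hX]

lemma integral_errorTerm_sq (hX : Measurable X) :
    ∫ ω, errorTerm n c (X ω) ^ 2 ∂μ
      = μ.real {ω | X ω = 1} * ((n : ℝ) ^ 2)⁻¹ + μ.real {ω | X ω = 0} * c ^ 2 := by
  simp only [errorTerm_sq]
  rw [integral_add (integrable_ite_eq hX _ _) (integrable_ite_eq hX _ _), integral_ite_eq hX,
    integral_ite_eq hX]

lemma integral_errorTerm_of_binomial (hn : n ≠ 0) (hX : Measurable X) (hc : c ∈ Set.Icc (0 : ℝ) 1)
    (hbin : IsBinomial μ X n c) :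
    ∫ ω, errorTerm n c (X ω) ∂μ = c ^ 2 * (1 - c) ^ (n - 1) := by
  rw [integral_errorTerm hX, measureReal_eq_of_binomial hc hbin,
    measureReal_eq_of_binomial hc hbin]
  obtain ⟨m, rfl⟩ := Nat.exists_eq_succ_of_ne_zero hn
  field_simp
  simp only [Nat.choose_one_right, Nat.choose_zero_right]
  push_cast
  ring

lemma integral_errorTerm_sq_of_binomial (hX : Measurable X) (hc : c ∈ Set.Icc (0 : ℝ) 1)
    (hbin : IsBinomial μ X n c) :
    ∫ ω, errorTerm n c (X ω) ^ 2 ∂μ = c * (1 - c) ^ (n - 1) / n + c ^ 2 * (1 - c) ^ n := by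
  rw [integral_errorTerm_sq hX, measureReal_eq_of_binomial hc hbin,
    measureReal_eq_of_binomial hc hbin]
  simp only [Nat.choose_one_right, Nat.choose_zero_right]
  rcases n with _ | m
  · simp
  · field_simp
    push_cast
    ring

lemma integral_errorTerm_mem_Icc (hn : n ≠ 0) (hX : Measurable X) (hc : c ∈ Set.Icc (0 : ℝ) 1)
    (hbin : IsBinomial μ X n c) :
    ∫ ω, errorTerm n c (X ω) ∂μ ∈ Set.Icc 0 (c / n) := by
  rw [integral_errorTerm_of_binomial hn hX hc hbin]
  obtain ⟨m, rfl⟩ := Nat.exists_eq_succ_of_ne_zero hn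
  have := sub_nonneg.2 hc.2
  refine ⟨by have := hc.1; positivity, ?_⟩
  calc c ^ 2 * (1 - c) ^ (m + 1 - 1) = c * (c * (1 - c) ^ m) := by simp; ring
    _ ≤ c * ((m : ℝ) + 1)⁻¹ := by gcongr; exacts [hc.1, mul_one_sub_pow_le_inv hc m]
    _ = c / (m + 1 : ℕ) := by push_cast; ring

lemma integral_errorTerm_sq_le (hn : n ≠ 0) (hX : Measurable X) (hc : c ∈ Set.Icc (0 : ℝ) 1)
    (hbin : IsBinomial μ X n c) :
    ∫ ω, errorTerm n c (X ω) ^ 2 ∂μ ≤ (2 * n + 1) / (n * (n + 1)) * c := by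
  rw [integral_errorTerm_sq_of_binomial hX hc hbin]
  obtain ⟨hc0, hc1⟩ := hc
  have h1c : 0 ≤ 1 - c := sub_nonneg.2 hc1
  have hfirst : c * (1 - c) ^ (n - 1) / n ≤ c / n := by
    gcongr
    exact mul_le_of_le_one_right hc0 (pow_le_one₀ h1c (by linarith))
  have hsecond : c ^ 2 * (1 - c) ^ n ≤ c * ((n : ℝ) + 1)⁻¹ := by
    rw [sq, mul_assoc]
    exact mul_le_mul_of_nonneg_left (mul_one_sub_pow_le_inv ⟨hc0, hc1⟩ n) hc0
  have hn' : (n : ℝ) ≠ 0 := Nat.cast_ne_zero.2 hn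
  calc _ ≤ c / n + c * ((n : ℝ) + 1)⁻¹ := add_le_add hfirst hsecond
    _ = (2 * n + 1) / (n * (n + 1)) * c := by field_simp; ring

end GoodTuring

open GoodTuring in
theorem stmt
    {Ω : Type*} [MeasurableSpace Ω] (μ : Measure Ω) [IsProbabilityMeasure μ]
    (p : ℕ → ℝ) (hp : ∀ j, p j ∈ Set.Ioo (0 : ℝ) 1) (hsum : Summable p)
    (n : ℕ) (X : ℕ → Ω → ℕ)
    (hmeas : ∀ j, Measurable (X j))
    (hindep : iIndepFun X μ)
    (hbin : ∀ j k, μ {ω | X j ω = k} =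
      ENNReal.ofReal ((n.choose k : ℝ) * p j ^ k * (1 - p j) ^ (n - k)))
    (W : ℝ) (hW : ∑' j, p j ≤ W) (hn : 1 ≤ n) :
    (∫ ω, ((∑' j, if X j ω = 1 then (1 : ℝ) else 0) / n
        - ∑' j, if X j ω = 0 then p j else 0) ^ 2 ∂μ)
      ≤ W ^ 2 / n ^ 2 + (2 * n + 1) / (n * (n + 1)) * W := by
  have hn0 : n ≠ 0 := Nat.one_le_iff_ne_zero.1 hn
  have hp' : ∀ j, p j ∈ Set.Icc (0 : ℝ) 1 := fun j => Set.Ioo_subset_Icc_self (hp j)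
  have hpW : ∀ N, ∑ j ∈ range N, p j ≤ W := fun N =>
    (hsum.sum_le_tsum _ fun j _ => (hp' j).1).trans hW
  have hmean := fun j => integral_errorTerm_mem_Icc hn0 (hmeas j) (hp' j) (hbin j)
  rw [← div_pow]
  refine integral_sq_le_of_hasSum (Y := fun j ω => errorTerm n (p j) (X j ω))
    (fun j => memLp_errorTerm (hmeas j))
    (fun j k hjk => (hindep.indepFun hjk).comp
      (measurable_of_countable (errorTerm n (p j))) (measurable_of_countable (errorTerm n (p k))))
    ?_ (fun N => ?_) (fun N => ?_)
  · filter_upwards [ae_finite_setOf_eq_one hp' hsum hbin] with ω hω using hasSum_errorTerm hsum hω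
  · rw [abs_of_nonneg (sum_nonneg fun j _ => (hmean j).1)]
    calc _ ≤ ∑ j ∈ range N, p j / n := sum_le_sum fun j _ => (hmean j).2
      _ ≤ W / n := by rw [← sum_div]; gcongr; exact hpW N
  · calc _ ≤ ∑ j ∈ range N, (2 * n + 1) / (n * (n + 1)) * p j := sum_le_sum fun j _ =>
          integral_errorTerm_sq_le hn0 (hmeas j) (hp' j) (hbin j)
      _ ≤ _ := by rw [← mul_sum]; gcongr; exact hpW N
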